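/- For n, m with 0 ≤ n, m ≤ N-1, the matrix elements of P_S in the Fock basis satisfy ⟨m|P_S|n⟩ = δ_{nm} / (1+ν_n(p,N)), where ν_n(p,N) = ∑_{u=1}^∞ n! p^{uN}/(n+uN)!. -/

import Mathlib

/-!
The Gram matrix `B` of the coherent states is circulant, so the discrete Fourier matrix
`F = (ω^{rk})`, `ω = e^{2πi/N}`, which satisfies `F Fᴴ = N • 1`, diagonalises it:
`B = Fᴴ D F` with `D = diag (e^{-p} μ_r)`. The eigenvalue `μ_r = ∑_{s ≡ r [N]} p^s / s!`
(`expResidue N r p`) appears when the exponential series of `exp (p x)` with `x^N = 1` is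
split into residue classes mod `N`. The Fock components of the coherent states are the columns
of `Fᴴ`, rescaled by `e^{-p/2} p^{n/2} / √n!`, hence `⟨m|P_S|n⟩` is that rescaling of
`(F B⁻¹ Fᴴ)_{mn} = (D⁻¹)_{mn}`; finally `μ_n = (p^n / n!) (1 + ν_n)`.
-/

open Complex ComplexConjugate Matrix Finset Nat Real

noncomputable def expResidue (N r : ℕ) (p : ℝ) : ℝ := ∑' u : ℕ, p ^ (r + N * u) / (r + N * u)!

lemma summable_expResidue (N r : ℕ) [NeZero N] (p : ℝ) :
    Summable fun u : ℕ => p ^ (r + N * u) / (r + N * u)! :=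
  (Real.summable_pow_div_factorial p).comp_injective fun _ _ h =>
    Nat.eq_of_mul_eq_mul_left (NeZero.pos N) (Nat.add_left_cancel h)

lemma expResidue_pos (N r : ℕ) [NeZero N] {p : ℝ} (hp : 0 < p) : 0 < expResidue N r p :=
  (summable_expResidue N r p).tsum_pos (fun _ => by positivity) 0 (by positivity)

lemma expResidue_eq_mul_one_add (N n : ℕ) [NeZero N] (p : ℝ) :
    expResidue N n p = p ^ n / n ! *
      (1 + ∑' u : ℕ, (n ! : ℝ) * p ^ ((u + 1) * N) / (n + (u + 1) * N)!) := by
  rw [expResidue, (summable_expResidue N n p).tsum_eq_zero_add, mul_add, mul_one,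
    ← tsum_mul_left]
  congr 1
  refine tsum_congr fun u => ?_
  rw [mul_comm N, pow_add]
  field_simp

lemma Complex.exp_ofReal_mul_eq_sum_expResidue {N : ℕ} [NeZero N] (p : ℝ) {x : ℂ}
    (hx : x ^ N = 1) : cexp (p * x) = ∑ r : Fin N, (expResidue N r p : ℂ) * x ^ (r : ℕ) := by
  have hterm (r u : ℕ) : (p * x) ^ (r + N * u) / (r + N * u)! =
      ((p ^ (r + N * u) / (r + N * u)! : ℝ) : ℂ) * x ^ r := by
    rw [mul_pow, pow_add x, pow_mul, hx, one_pow, mul_one]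
    push_cast
    ring
  rw [Complex.exp_eq_exp_ℂ, NormedSpace.exp_eq_tsum_div]
  dsimp only
  rw [Nat.sumByResidueClasses (NormedSpace.expSeries_div_summable (p * x)) N]
  simp only [hterm, tsum_mul_right, expResidue, Complex.ofReal_tsum]
  obtain ⟨k, rfl⟩ : ∃ k, N = k + 1 := Nat.exists_eq_succ_of_ne_zero (NeZero.ne N)
  -- `ZMod (k + 1)` is `Fin (k + 1)` by definition
  rfl

lemma geom_sum_fin_eq_ite {K : Type*} [Field K] [DecidableEq K] {N : ℕ} {x : K}
    (hx : x ^ N = 1) : ∑ j : Fin N, x ^ (j : ℕ) = if x = 1 then (N : K) else 0 := by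
  rw [Fin.sum_univ_eq_sum_range (x ^ ·)]
  split_ifs with h
  · simp [h]
  · rw [geom_sum_eq h, hx, sub_self, zero_div]

lemma pow_mul_inv_pow_pow_eq_one {M : Type*} [DivisionCommMonoid M] {ζ : M} {N : ℕ}
    (h : ζ ^ N = 1) (a b : ℕ) : (ζ ^ a * ζ⁻¹ ^ b) ^ N = 1 := by
  rw [mul_pow, pow_right_comm, pow_right_comm ζ⁻¹, inv_pow, h]
  simp

theorem IsPrimitiveRoot.star_eq_inv {ζ : ℂ} {N : ℕ} [NeZero N] (hζ : IsPrimitiveRoot ζ N) :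
    star ζ = ζ⁻¹ :=
  (Complex.inv_eq_conj (Complex.norm_eq_one_of_pow_eq_one hζ.pow_eq_one (NeZero.ne N))).symm

theorem IsPrimitiveRoot.vandermonde_mul_conjTranspose {ζ : ℂ} {N : ℕ} [NeZero N]
    (hζ : IsPrimitiveRoot ζ N) :
    vandermonde (fun i : Fin N => ζ ^ (i : ℕ)) * (vandermonde fun i : Fin N => ζ ^ (i : ℕ))ᴴ =
      (N : ℂ) • 1 := by
  ext a b
  have hx1 : ζ ^ (a : ℕ) * ζ⁻¹ ^ (b : ℕ) = 1 ↔ a = b := by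
    rw [inv_pow, mul_inv_eq_one₀ (pow_ne_zero _ (hζ.ne_zero (NeZero.ne N)))]
    exact ⟨fun h => Fin.ext (hζ.pow_inj a.isLt b.isLt h), fun h => h ▸ rfl⟩
  simp only [mul_apply, vandermonde_apply, conjTranspose_apply, star_pow, hζ.star_eq_inv,
    Matrix.smul_apply, one_apply]
  simp_rw [← mul_pow]
  rw [geom_sum_fin_eq_ite (pow_mul_inv_pow_pow_eq_one hζ.pow_eq_one _ _), smul_ite, smul_eq_mul,
    mul_one, smul_zero]
  exact if_congr hx1 rfl rfl

theorem Matrix.mul_inv_conjTranspose_mul_mul_conjTranspose {n 𝕜 : Type*} [Fintype n]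
    [DecidableEq n] [Field 𝕜] [Star 𝕜] {U : Matrix n n 𝕜} {c : 𝕜} (hc : c ≠ 0)
    (hU : U * Uᴴ = c • 1) (M : Matrix n n 𝕜) : U * (Uᴴ * M * U)⁻¹ * Uᴴ = M⁻¹ := by
  have hUinv : U⁻¹ = c⁻¹ • Uᴴ :=
    inv_eq_right_inv (by rw [mul_smul_comm, hU, smul_smul, inv_mul_cancel₀ hc, one_smul])
  have hUHinv : Uᴴ⁻¹ = c⁻¹ • U :=
    inv_eq_left_inv (by rw [smul_mul_assoc, hU, smul_smul, inv_mul_cancel₀ hc, one_smul])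
  have hUU : U * U⁻¹ = 1 := by
    rw [hUinv, mul_smul_comm, hU, smul_smul, inv_mul_cancel₀ hc, one_smul]
  rw [mul_inv_rev, mul_inv_rev, hUHinv, ← mul_assoc U, hUU, one_mul, mul_smul_comm,
    smul_mul_assoc, mul_assoc, hU, mul_smul_comm, mul_one, smul_smul, inv_mul_cancel₀ hc,
    one_smul]

theorem Matrix.inv_diagonal_of_ne_zero {n 𝕜 : Type*} [Fintype n] [DecidableEq n] [Field 𝕜]
    {d : n → 𝕜} (hd : ∀ i, d i ≠ 0) : (diagonal d)⁻¹ = diagonal d⁻¹ := by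
  refine inv_eq_right_inv ?_
  rw [diagonal_mul_diagonal, ← diagonal_one]
  exact congrArg diagonal (funext fun i => mul_inv_cancel₀ (hd i))

noncomputable def dftMatrix (N : ℕ) : Matrix (Fin N) (Fin N) ℂ :=
  vandermonde fun i => cexp (2 * π * I / N) ^ (i : ℕ)

lemma star_dftMatrix_apply (N : ℕ) (i j : Fin N) :
    star (dftMatrix N i j) = cexp (-(2 * π * I) * (j : ℂ) * (i : ℂ) / N) := by
  rw [dftMatrix, vandermonde_apply, ← pow_mul, ← Complex.exp_nat_mul, star_def,
    ← Complex.exp_conj]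
  congr 1
  simp only [map_mul, map_div₀, map_natCast, map_ofNat, conj_ofReal, conj_I]
  push_cast
  ring

noncomputable def coherentGram (N : ℕ) (p : ℝ) : Matrix (Fin N) (Fin N) ℂ :=
  .of fun k l => (Real.exp (-p) : ℂ) * cexp (p * cexp (2 * π * I * ((l : ℂ) - (k : ℂ)) / N))

lemma coherentGram_eq_conjTranspose_mul_diagonal_mul (N : ℕ) [NeZero N] (p : ℝ) :
    coherentGram N p = (dftMatrix N)ᴴ *
      diagonal (fun r : Fin N => ((Real.exp (-p) * expResidue N r p : ℝ) : ℂ)) * dftMatrix N := by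
  ext k l
  set ζ := cexp (2 * π * I / N)
  have hζ : IsPrimitiveRoot ζ N := Complex.isPrimitiveRoot_exp N (NeZero.ne N)
  have hx : cexp (2 * π * I * ((l : ℂ) - (k : ℂ)) / N) = ζ ^ (l : ℕ) * ζ⁻¹ ^ (k : ℕ) := by
    rw [← Complex.exp_neg, ← Complex.exp_nat_mul, ← Complex.exp_nat_mul, ← Complex.exp_add]
    congr 1
    ring
  rw [coherentGram, of_apply, hx, Complex.exp_ofReal_mul_eq_sum_expResidue p
    (pow_mul_inv_pow_pow_eq_one hζ.pow_eq_one _ _), mul_sum, mul_apply]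
  refine sum_congr rfl fun r _ => ?_
  rw [mul_diagonal, conjTranspose_apply, dftMatrix, vandermonde_apply, vandermonde_apply,
    star_pow, star_pow, hζ.star_eq_inv]
  push_cast
  ring

lemma coherentCoeff_sq {p : ℝ} (hp : 0 ≤ p) (n : ℕ) :
    (Real.exp (-p / 2) * √p ^ n / √(n ! : ℝ)) ^ 2 = Real.exp (-p) * p ^ n / n ! := by
  rw [div_pow, mul_pow, ← Real.exp_nat_mul, ← pow_mul, mul_comm n, pow_mul, Real.sq_sqrt hp,
    Real.sq_sqrt (Nat.cast_nonneg _)]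
  push_cast
  ring_nf

lemma coherentCoeff_sq_div_eigenvalue (N n : ℕ) [NeZero N] {p : ℝ} (hp : 0 < p) :
    (Real.exp (-p / 2) * √p ^ n / √(n ! : ℝ)) ^ 2 / (Real.exp (-p) * expResidue N n p) =
      (1 + ∑' u : ℕ, (n ! : ℝ) * p ^ ((u + 1) * N) / (n + (u + 1) * N)!)⁻¹ := by
  rw [coherentCoeff_sq hp.le, expResidue_eq_mul_one_add, ← mul_assoc, mul_div_assoc,
    div_mul_eq_div_div, div_self (by positivity), one_div]

lemma Matrix.sum_conj_mul_mul_eq_mul_mul_conjTranspose_apply {n : Type*} [Fintype n]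
    (U M : Matrix n n ℂ) (a b : ℝ) (i j : n) :
    ∑ l, ∑ k, conj ((a : ℂ) * Uᴴ l i) * M l k * ((b : ℂ) * Uᴴ k j) =
      a * b * (U * M * Uᴴ) i j := by
  simp only [mul_apply, sum_mul, mul_sum, conjTranspose_apply]
  rw [sum_comm]
  refine sum_congr rfl fun l _ => sum_congr rfl fun k _ => ?_
  rw [map_mul, Complex.conj_ofReal, ← star_def, star_star]
  ring

theorem stmt13 (N : ℕ) (hN : 0 < N) (p : ℝ) (hp : 0 < p)
    (T : Fin N → ℕ → ℂ)
    (hT : ∀ (k : Fin N) (n : ℕ),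
      T k n = ((Real.exp (-p / 2) * Real.sqrt p ^ n / Real.sqrt (Nat.factorial n) : ℝ) : ℂ) *
        Complex.exp (-(2 * Real.pi * Complex.I) * (k : ℂ) * (n : ℂ) / (N : ℂ)))
    (B : Matrix (Fin N) (Fin N) ℂ)
    (hB : ∀ k l : Fin N, B k l = (Real.exp (-p) : ℂ) *
      Complex.exp ((p : ℂ) * Complex.exp (2 * Real.pi * Complex.I * ((l : ℂ) - (k : ℂ)) / (N : ℂ))))
    (ν : ℕ → ℝ)
    (hν : ∀ n : ℕ, ν n = ∑' u : ℕ,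
      (Nat.factorial n : ℝ) * p ^ ((u + 1) * N) / Nat.factorial (n + (u + 1) * N)) :
    ∀ m n : ℕ, m ≤ N - 1 → n ≤ N - 1 →
      (∑ l : Fin N, ∑ k : Fin N, (starRingEnd ℂ) (T l m) * (B⁻¹ l k) * T k n) =
        if n = m then (((1 + ν n : ℝ))⁻¹ : ℂ) else 0 := by
  intro m n hm hn
  have : NeZero N := ⟨hN.ne'⟩
  obtain ⟨i, rfl⟩ : ∃ i : Fin N, (i : ℕ) = m := ⟨⟨m, by omega⟩, rfl⟩
  obtain ⟨j, rfl⟩ : ∃ j : Fin N, (j : ℕ) = n := ⟨⟨n, by omega⟩, rfl⟩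
  set d : Fin N → ℂ := fun r => ((Real.exp (-p) * expResidue N r p : ℝ) : ℂ) with hd
  have hT' (k a : Fin N) : T k a =
      ((Real.exp (-p / 2) * √p ^ (a : ℕ) / √((a : ℕ)! : ℝ) : ℝ) : ℂ) * (dftMatrix N)ᴴ k a := by
    rw [hT, conjTranspose_apply, star_dftMatrix_apply]
  have hB' : B = (dftMatrix N)ᴴ * diagonal d * dftMatrix N := by
    rw [← coherentGram_eq_conjTranspose_mul_diagonal_mul]
    exact ext hB
  have hd0 (r : Fin N) : d r ≠ 0 :=
    Complex.ofReal_ne_zero.2 (mul_pos (Real.exp_pos _) (expResidue_pos N r hp)).ne'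
  have hF : dftMatrix N * (dftMatrix N)ᴴ = (N : ℂ) • 1 :=
    (Complex.isPrimitiveRoot_exp N hN.ne').vandermonde_mul_conjTranspose
  simp only [hT']
  rw [sum_conj_mul_mul_eq_mul_mul_conjTranspose_apply, hB',
    mul_inv_conjTranspose_mul_mul_conjTranspose (Nat.cast_ne_zero.2 hN.ne') hF,
    inv_diagonal_of_ne_zero hd0, diagonal_apply]
  by_cases hij : i = j
  · subst hij
    rw [if_pos rfl, if_pos rfl, Pi.inv_apply, ← Complex.ofReal_inv (1 + ν i), hν,
      ← coherentCoeff_sq_div_eigenvalue N i hp, hd]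
    push_cast
    ring
  · rw [if_neg hij, if_neg (fun h => hij (Fin.ext h.symm)), mul_zero]
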